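/- Let ω ∈ ℝ, x = cos(ω/2), and let ζ₁,…,ζ_h ∈ ℝ. Define A(θ) as the 4×4 matrix with 1's at (1,1),(4,4), cos(ω/2) at (2,2),(3,3), -i e^{iθ} sin(ω/2) at (2,3), -i e^{-iθ} sin(ω/2) at (3,2), and zeros elsewhere. Let v_k = A(ζ_k)···A(ζ₁)·(0,0,1,1)ᵀ and write v_k = (a_k, b_k, c_k, d_k)ᵀ. Then for all k: a_k = 0 and d_k = 1, and the third coordinates satisfy c₀ = 1 and the second-order recurrence c_k = x(1+e^{-i(ζ_k-ζ_{k-1})}) c_{k-1} - e^{-i(ζ_k-ζ_{k-1})} c_{k-2} for k ≥ 2. -/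
import Mathlib


open Matrix

/-- The 4×4 unitary `A(θ)` with rotation parameter `ω`. -/
noncomputable def Amat (ω θ : ℝ) : Matrix (Fin 4) (Fin 4) ℂ :=
  !![1, 0, 0, 0;
     0, (Real.cos (ω / 2) : ℂ), -Complex.I * Complex.exp (Complex.I * θ) * (Real.sin (ω / 2) : ℂ), 0;
     0, -Complex.I * Complex.exp (-Complex.I * θ) * (Real.sin (ω / 2) : ℂ), (Real.cos (ω / 2) : ℂ), 0;
     0, 0, 0, 1]

lemma Amat_mulVec (ω θ : ℝ) (w : Fin 4 → ℂ) :
    (Amat ω θ).mulVec w =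
      ![w 0,
        (Real.cos (ω / 2) : ℂ) * w 1 +
          (-Complex.I * Complex.exp (Complex.I * θ) * (Real.sin (ω / 2) : ℂ)) * w 2,
        (-Complex.I * Complex.exp (-Complex.I * θ) * (Real.sin (ω / 2) : ℂ)) * w 1 +
          (Real.cos (ω / 2) : ℂ) * w 2,
        w 3] := by
  funext i
  fin_cases i <;>
    simp [Amat, Matrix.mulVec, dotProduct, Fin.sum_univ_four]

theorem stmt_14 (ω : ℝ) (x : ℝ) (hx : x = Real.cos (ω / 2)) (h : ℕ) (ζ : ℕ → ℝ)
    (v : ℕ → Fin 4 → ℂ)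
    (hv0 : v 0 = ![0, 0, 1, 1])
    (hvrec : ∀ k, k < h → v (k + 1) = (Amat ω (ζ (k + 1))).mulVec (v k)) :
    (∀ k, k ≤ h → v k 0 = 0) ∧ (∀ k, k ≤ h → v k 3 = 1) ∧
    v 0 2 = 1 ∧
    (∀ k, 2 ≤ k → k ≤ h →
      v k 2 = (x : ℂ) * (1 + Complex.exp (-Complex.I * ((ζ k : ℝ) - ζ (k - 1)))) * v (k - 1) 2 -
        Complex.exp (-Complex.I * ((ζ k : ℝ) - ζ (k - 1))) * v (k - 2) 2) := by
  have e0 : ∀ k, k < h → v (k + 1) 0 = v k 0 := fun k hk => by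
    rw [hvrec k hk, Amat_mulVec]; rfl
  have e3 : ∀ k, k < h → v (k + 1) 3 = v k 3 := fun k hk => by
    rw [hvrec k hk, Amat_mulVec]; rfl
  have e1 : ∀ k, k < h → v (k + 1) 1 =
      (Real.cos (ω / 2) : ℂ) * v k 1 +
        (-Complex.I * Complex.exp (Complex.I * ζ (k + 1)) * (Real.sin (ω / 2) : ℂ)) * v k 2 :=
    fun k hk => by rw [hvrec k hk, Amat_mulVec]; rfl
  have e2 : ∀ k, k < h → v (k + 1) 2 =
      (-Complex.I * Complex.exp (-Complex.I * ζ (k + 1)) * (Real.sin (ω / 2) : ℂ)) * v k 1 +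
        (Real.cos (ω / 2) : ℂ) * v k 2 :=
    fun k hk => by rw [hvrec k hk, Amat_mulVec]; rfl
  refine ⟨?_, ?_, ?_, ?_⟩
  · intro k hk
    induction k with
    | zero => simp [hv0]
    | succ n ih => rw [e0 n (lt_of_lt_of_le (Nat.lt_succ_self n) hk)]
                   exact ih (le_of_lt (lt_of_lt_of_le (Nat.lt_succ_self n) hk))
  · intro k hk
    induction k with
    | zero => simp [hv0]
    | succ n ih => rw [e3 n (lt_of_lt_of_le (Nat.lt_succ_self n) hk)]
                   exact ih (le_of_lt (lt_of_lt_of_le (Nat.lt_succ_self n) hk))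
  · simp [hv0]
  · intro k hk2 hkh
    obtain ⟨m, rfl⟩ : ∃ m, k = m + 2 := ⟨k - 2, by omega⟩
    have hm1 : m < h := by omega
    have hm2 : m + 1 < h := by omega
    simp only [Nat.add_sub_cancel, show m + 2 - 1 = m + 1 from rfl]
    have hexp : Complex.exp (-Complex.I * ((ζ (m + 2) : ℝ) - ζ (m + 1))) =
        Complex.exp (-Complex.I * ζ (m + 2)) * Complex.exp (Complex.I * ζ (m + 1)) := by
      rw [← Complex.exp_add]; ring_nf
    have he : Complex.exp (Complex.I * ζ (m + 1)) * Complex.exp (-Complex.I * ζ (m + 1)) = 1 := by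
      rw [← Complex.exp_add]; ring_nf; exact Complex.exp_zero
    have hcs : ((Real.cos (ω / 2) : ℂ))^2 + ((Real.sin (ω / 2) : ℂ))^2 = 1 := by
      exact_mod_cast Real.cos_sq_add_sin_sq (ω / 2)
    rw [e2 (m + 1) hm2, e2 m hm1, e1 m hm1, hexp, hx]
    set c := (Real.cos (ω / 2) : ℂ)
    set s := (Real.sin (ω / 2) : ℂ)
    set E1 := Complex.exp (Complex.I * ζ (m + 1))
    set E1' := Complex.exp (-Complex.I * ζ (m + 1))
    set E2' := Complex.exp (-Complex.I * ζ (m + 2))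
    set B := v m 1
    set C := v m 2
    linear_combination (Complex.I * c * E2' * s * B) * he - (E2' * E1 * C) * hcs + (E2' * s^2 * E1 * C) * Complex.I_sq
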